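/- arXiv:2206.07337 — 2 statements merged into one kernel-verified Lean document; each statement's English description precedes it below -/
import Mathlib

section
/- Let p be a prime, K a finite extension of ℚ_p with ring of integers 𝔬 and normalized additive valuation ord, and let B ∈ 𝓗_n(𝔬)^{nd}. Then the set S({B}) ⊆ ℤ_{≥0}^n has a greatest element with respect to the lexicographic order; that is, there exists a ∈ S({B}) such that b ⪯_lex a for every b ∈ S({B}) (so that the Gross–Keating invariant GK(B) is well defined). -/
open scoped Classical
open Matrix

/-- `S(B)`: nondecreasing sequences `(a_1,…,a_n)` of nonnegative integers with
`ord(b_ii) ≥ a_i` and `ord(2 b_ij) ≥ (a_i+a_j)/2`. -/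
def Sset {K : Type} [Field K] (v : AddValuation K (WithTop ℤ)) {n : ℕ}
    (B : Matrix (Fin n) (Fin n) K) : Set (Fin n → ℕ) :=
  {a | Monotone a ∧ (∀ i, ((a i : ℤ) : WithTop ℤ) ≤ v (B i i)) ∧
    ∀ i j, (((a i : ℤ) + (a j : ℤ) : ℤ) : WithTop ℤ) ≤ v (2 * B i j) + v (2 * B i j)}

/-- `S({B}) = ⋃_{U ∈ GL_n(𝔬)} S(ᵗU·B·U)`. -/
def SsetFull {K : Type} [Field K] (v : AddValuation K (WithTop ℤ)) {n : ℕ}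
    (B : Matrix (Fin n) (Fin n) K) : Set (Fin n → ℕ) :=
  {a | ∃ U : Matrix (Fin n) (Fin n) K, (∀ i j, 0 ≤ v (U i j)) ∧
    (∃ W : Matrix (Fin n) (Fin n) K,
      (∀ i j, 0 ≤ v (W i j)) ∧ U * W = 1 ∧ W * U = 1) ∧
    a ∈ Sset v (Uᵀ * B * U)}

/-- The lexicographic order on `Fin n → ℕ` (`a ⪯_lex b`). -/
def lexLe {n : ℕ} (a b : Fin n → ℕ) : Prop :=
  a = b ∨ ∃ k : Fin n, (∀ l : Fin n, l < k → a l = b l) ∧ a k < b k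

/-- `𝔢_i(a)` for a sequence `a` (with `i` ranging over `1,…,n`, 1-based). -/
def eGK {n : ℕ} (a : Fin n → ℕ) (i : ℕ) : ℕ :=
  if Odd i then ∑ k ∈ Finset.univ.filter (fun k : Fin n => (k : ℕ) < i), a k
  else 2 * ((∑ k ∈ Finset.univ.filter (fun k : Fin n => (k : ℕ) < i), a k) / 2)

/-!
Every element of `S({B})` is bounded by `ord(2ⁿ det B)`: if `a ∈ S(ᵗU B U)` then each of the `n!`
terms of `det (2 ᵗU B U)` has valuation at least `a_1 + ⋯ + a_n`, and `det U` is a unit of `𝔬`.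
So `S({B})` is finite; it contains `0`, and a finite nonempty set has a lexicographic maximum.
-/

namespace AddValuation

variable {R Γ : Type*} [CommRing R] [LinearOrderedAddCommMonoidWithTop Γ] (v : AddValuation R Γ)

theorem map_prod {ι : Type*} (s : Finset ι) (f : ι → R) :
    v (∏ i ∈ s, f i) = ∑ i ∈ s, v (f i) := by
  induction s using Finset.cons_induction with
  | empty => simp
  | cons a s _ ih => rw [Finset.prod_cons, Finset.sum_cons, map_mul, ih]

variable {ι : Type*} [Fintype ι] [DecidableEq ι]

theorem le_map_det {C : Matrix ι ι R} {g : Γ} (h : ∀ σ : Equiv.Perm ι, g ≤ ∑ i, v (C (σ i) i)) :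
    g ≤ v C.det := by
  rw [Matrix.det_apply]
  refine map_le_sum v fun σ _ => ?_
  rcases Int.units_eq_one_or (Equiv.Perm.sign σ) with hs | hs <;>
    simpa [hs, Units.smul_def, map_neg, map_prod] using h σ

theorem map_det_nonneg {C : Matrix ι ι R} (h : ∀ i j, 0 ≤ v (C i j)) : 0 ≤ v C.det :=
  v.le_map_det fun _ => Finset.sum_nonneg fun _ _ => h _ _

theorem map_det_eq_zero_of_mul_eq_one {U W : Matrix ι ι R} (hU : ∀ i j, 0 ≤ v (U i j))
    (hW : ∀ i j, 0 ≤ v (W i j)) (hUW : U * W = 1) : v U.det = 0 := by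
  have hsum : v U.det + v W.det = 0 := by
    rw [← map_mul, ← Matrix.det_mul, hUW, Matrix.det_one, map_one]
  exact ((add_eq_zero_iff_of_nonneg (v.map_det_nonneg hU) (v.map_det_nonneg hW)).mp hsum).1

end AddValuation

theorem WithTop.le_of_add_self_le_add_self {α : Type*} [AddCommMonoid α] [LinearOrder α]
    [IsOrderedCancelAddMonoid α] {x y : WithTop α} (h : x + x ≤ y + y) : x ≤ y := by
  induction y with
  | top => exact le_top
  | coe b =>
    induction x with
    | top => simp at h
    | coe a =>
      norm_cast at h ⊢
      by_contra! hlt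
      exact (add_lt_add hlt hlt).not_ge h

section GrossKeating

variable {K : Type} [Field K] (v : AddValuation K (WithTop ℤ)) {n : ℕ}

theorem sum_le_map_det_two_smul_of_mem_Sset {C : Matrix (Fin n) (Fin n) K} {a : Fin n → ℕ}
    (ha : a ∈ Sset v C) : (((∑ i, a i : ℕ) : ℤ) : WithTop ℤ) ≤ v ((2 : K) • C).det := by
  refine v.le_map_det fun σ => WithTop.le_of_add_self_le_add_self ?_
  calc (((∑ i, a i : ℕ) : ℤ) : WithTop ℤ) + (((∑ i, a i : ℕ) : ℤ) : WithTop ℤ)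
      = ∑ i, (((a (σ i) : ℤ) + (a i : ℤ) : ℤ) : WithTop ℤ) := by
        push_cast
        rw [Finset.sum_add_distrib, Equiv.sum_comp σ fun i => (a i : WithTop ℤ)]
    _ ≤ ∑ i, (v (2 * C (σ i) i) + v (2 * C (σ i) i)) :=
        Finset.sum_le_sum fun i _ => ha.2.2 (σ i) i
    _ = ∑ i, v (((2 : K) • C) (σ i) i) + ∑ i, v (((2 : K) • C) (σ i) i) := by
        simp only [Matrix.smul_apply, smul_eq_mul, Finset.sum_add_distrib]

theorem sum_le_of_mem_SsetFull {B : Matrix (Fin n) (Fin n) K} {a : Fin n → ℕ}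
    (ha : a ∈ SsetFull v B) : (((∑ i, a i : ℕ) : ℤ) : WithTop ℤ) ≤ v (2 ^ n * B.det) := by
  obtain ⟨U, hU, ⟨W, hW, hUW, -⟩, haU⟩ := ha
  have hdetU : v U.det = 0 := v.map_det_eq_zero_of_mul_eq_one hU hW hUW
  have hdet : v ((2 : K) • (Uᵀ * B * U)).det = v (2 ^ n * B.det) := by
    simp only [Matrix.det_smul, Fintype.card_fin, Matrix.det_mul, Matrix.det_transpose,
      AddValuation.map_mul, hdetU, add_zero, zero_add]
  exact hdet ▸ sum_le_map_det_two_smul_of_mem_Sset v haU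

theorem SsetFull_finite (h2 : (2 : K) ≠ 0) {B : Matrix (Fin n) (Fin n) K} (hB : B.det ≠ 0) :
    (SsetFull v B).Finite := by
  obtain ⟨N, hN⟩ := WithTop.ne_top_iff_exists.mp
    ((v.ne_top_iff).mpr (mul_ne_zero (pow_ne_zero n h2) hB))
  refine (Set.finite_Iic fun _ : Fin n => N.toNat).subset fun a ha i => ?_
  have hsum : ((∑ j, a j : ℕ) : ℤ) ≤ N := by exact_mod_cast hN ▸ sum_le_of_mem_SsetFull v ha
  show a i ≤ N.toNat
  have hi : a i ≤ ∑ j, a j := Finset.single_le_sum (fun j _ => Nat.zero_le (a j)) (Finset.mem_univ i)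
  omega

theorem zero_mem_SsetFull {B : Matrix (Fin n) (Fin n) K} (hdiag : ∀ i, 0 ≤ v (B i i))
    (hoff : ∀ i j, i ≠ j → 0 ≤ v (2 * B i j)) : 0 ∈ SsetFull v B := by
  have hone : ∀ i j, 0 ≤ v ((1 : Matrix (Fin n) (Fin n) K) i j) := by
    intro i j
    rcases eq_or_ne i j with rfl | hij <;> simp [*]
  have htwo : ∀ i j, 0 ≤ v (2 * B i j) := by
    intro i j
    rcases eq_or_ne i j with rfl | hij
    · rw [AddValuation.map_mul]
      exact add_nonneg (by simpa [one_add_one_eq_two] using v.map_add (1 : K) 1) (hdiag i)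
    · exact hoff i j hij
  refine ⟨1, hone, ⟨1, hone, one_mul 1, one_mul 1⟩, monotone_const, fun i => ?_, fun i j => ?_⟩
  · simpa using hdiag i
  · simpa using add_nonneg (htwo i j) (htwo i j)

end GrossKeating

theorem exists_lexLe_greatest_of_finite {n : ℕ} {s : Set (Fin n → ℕ)} (hs : s.Finite)
    (hne : s.Nonempty) : ∃ a ∈ s, ∀ b ∈ s, lexLe b a := by
  obtain ⟨a, ha, hmax⟩ := Set.exists_max_image s toLex hs hne
  refine ⟨a, ha, fun b hb => ?_⟩
  rcases (hmax b hb).eq_or_lt with h | ⟨k, hk, hlt⟩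
  · exact Or.inl (toLex.injective h)
  · exact Or.inr ⟨k, hk, hlt⟩

theorem statement6_general (p : ℕ) [Fact (Nat.Prime p)]
    (K : Type) [Field K] [Algebra ℚ_[p] K]
    (v : AddValuation K (WithTop ℤ))
    (n : ℕ)
    (B : Matrix (Fin n) (Fin n) K)
    (hdiag : ∀ i, 0 ≤ v (B i i))
    (hoff : ∀ i j, i ≠ j → 0 ≤ v (2 * B i j))
    (hnd : B.det ≠ 0) :
    ∃ a ∈ SsetFull v B, ∀ b ∈ SsetFull v B, lexLe b a := by
  have : CharZero K := charZero_of_injective_algebraMap (algebraMap ℚ_[p] K).injective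
  exact exists_lexLe_greatest_of_finite (SsetFull_finite v two_ne_zero hnd)
    ⟨0, zero_mem_SsetFull v hdiag hoff⟩

theorem statement6 (p : ℕ) [Fact (Nat.Prime p)]
    (K : Type) [Field K] [Algebra ℚ_[p] K] [FiniteDimensional ℚ_[p] K]
    [Algebra ℤ_[p] K] [IsScalarTower ℤ_[p] ℚ_[p] K]
    (v : AddValuation K (WithTop ℤ))
    (hv0 : ∀ x : K, v x = ⊤ ↔ x = 0)
    (hvint : ∀ x : K, 0 ≤ v x ↔ IsIntegral ℤ_[p] x)
    (hvnorm : ∃ π : K, v π = 1)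
    (n : ℕ)
    (B : Matrix (Fin n) (Fin n) K) (hsymm : B.IsSymm)
    (hdiag : ∀ i, 0 ≤ v (B i i))
    (hoff : ∀ i j, i ≠ j → 0 ≤ v (2 * B i j))
    (hnd : B.det ≠ 0) :
    ∃ a ∈ SsetFull v B, ∀ b ∈ SsetFull v B, lexLe b a :=
  statement6_general p K v n B hdiag hoff hnd
end

section
/- Let H = (a_1,…,a_n; ε_1,…,ε_n) be a naive EGK datum of odd length n ≥ 3 with ε_{n−1} = 0. Write a_i(Y) := a_i(H,Y) and b_i(Y) := a_i(H_{n−1},Y), with the convention b_m(Y) := 0 if m < 0 or m > 𝔢_{n−1}. Then for every 0 ≤ l ≤ 𝔢_n: a_l(Y) = b_l(Y)·Y^l + ε_n·b_{𝔢_n−l}(Y)·Y^{𝔢_n−l}. -/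
/-!
Since `ε_{n-1} = 0`, the factor `D` in the last step of the recursion for `𝓕(H)` is a monomial.
In the variables `v = Y^{1/2}`, `u = X^{1/2}` and with `G(t) = t^{𝔢_{n-1}} 𝓕(H_{n-1}; v, t)`,
this gives `u^{𝔢_n} 𝓕(H; v, u) = G(vu) + ε_n u^{2𝔢_n} G(vu⁻¹)`. By hypothesis
`G(u) = ∑ b_i u^{2i}` with coefficients in `ℚ(v)`; as `vu` and `vu⁻¹` are transcendental over
`ℚ(v)`, substituting them for `u` is a field endomorphism over `ℚ(v)`, so `G(vu) = ∑ b_i (vu)^{2i}`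
and `G(vu⁻¹) = ∑ b_i (vu⁻¹)^{2i}`. Comparing coefficients of `u^{2l}` gives the claim.
-/

open scoped Classical

noncomputable section

/-- `𝔢_i` attached to a sequence `a` (1-based index `i`; `a k` is `a_{k+1}`). -/
def eInv (a : ℕ → ℕ) (i : ℕ) : ℕ :=
  if Odd i then ∑ k ∈ Finset.range i, a k
  else 2 * ((∑ k ∈ Finset.range i, a k) / 2)

/-- A naive EGK datum of length `n`, given by `a k = a_{k+1}` and `ε k = ε_{k+1}`. -/
structure IsNEGK (n : ℕ) (a : ℕ → ℕ) (ε : ℕ → ℤ) : Prop where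
  pos : 0 < n
  mono : ∀ i, i + 1 < n → a i ≤ a (i + 1)
  sign : ∀ i, i < n → ε i = 0 ∨ ε i = 1 ∨ ε i = -1
  cond2 : ∀ i, i < n → Odd i → (ε i ≠ 0 ↔ Even (∑ k ∈ Finset.range (i + 1), a k))
  cond3 : ∀ i, i < n → Even i → ε i ≠ 0
  cond4 : ε 0 = 1
  cond5 : ∀ i, i < n → 2 ≤ i → Even i → Even (∑ k ∈ Finset.range i, a k) →
    ε i = ε (i - 1) ^ (a i + a (i - 1)) * ε (i - 2)

/-- The factors `C` (for even `i`) and `D` (for odd `i`), written in the variables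
`u = X^{1/2}`, `v = Y^{1/2}`. -/
def Cfun {K : Type} [Field K] (i : ℕ) (e et : ℕ) (ξ : K) (v u : K) : K :=
  if Even i then
    v ^ et * u ^ (-((e : ℤ) - (et : ℤ)) - 2) * (1 - ξ * (v⁻¹) ^ 2 * u ^ 2) /
      ((u⁻¹) ^ 2 - u ^ 2)
  else v ^ et * u ^ (-((e : ℤ) - (et : ℤ))) / (1 - ξ * u ^ 2)

/-- The rational function `𝓕(H;Y,X)` of a naive EGK datum of length `N`,
written as a function of `v = Y^{1/2}` and `u = X^{1/2}`. -/
def FF {K : Type} [Field K] (a : ℕ → ℕ) (ε : ℕ → ℤ) : ℕ → K → K → K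
  | 0 => fun _ _ => 1
  | 1 => fun _ u => ∑ i ∈ Finset.range (a 0 + 1), u ^ (2 * (i : ℤ) - (a 0 : ℤ))
  | (m + 2) => fun v u =>
      (Cfun (m + 2) (eInv a (m + 2)) (eInv a (m + 1))
          (if Even (m + 2) then ((ε (m + 1) : ℤ) : K) else ((ε m : ℤ) : K)) v u) *
            FF a ε (m + 1) v (v * u) +
        (if Even (m + 2) then (1 : K) else ((ε (m + 1) : ℤ) : K)) *
          (Cfun (m + 2) (eInv a (m + 2)) (eInv a (m + 1))
            (if Even (m + 2) then ((ε (m + 1) : ℤ) : K) else ((ε m : ℤ) : K)) v u⁻¹) *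
            FF a ε (m + 1) v (v * u⁻¹)

/-- The field `ℚ(Y^{1/2})(X^{1/2})` in which the generic identities are stated. -/
abbrev KK : Type := RatFunc (RatFunc ℚ)

/-- The generic point `u = X^{1/2}`. -/
def uGen : KK := RatFunc.X

/-- The generic point `v = Y^{1/2}`. -/
def vGen : KK := RatFunc.C RatFunc.X

end

/-- `Y^m` (with `m ∈ ℤ`), i.e. `v^{2m}` at the generic point. -/
noncomputable def Yz (m : ℤ) : KK := vGen ^ (2 * m)

namespace RatFunc

variable {K : Type*} [Field K]

theorem eq_zero_of_sum_C_mul_X_pow_eq_zero {s : Finset ℕ} {c : ℕ → K} {d : ℕ → ℕ}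
    (hd : Function.Injective d) (h : ∑ k ∈ s, C (c k) * X ^ d k = 0) {k : ℕ} (hk : k ∈ s) :
    c k = 0 := by
  have hpoly : ∑ j ∈ s, Polynomial.C (c j) * Polynomial.X ^ d j = 0 := by
    apply algebraMap_injective K
    simpa [map_sum, algebraMap_C, algebraMap_X] using h
  simpa [Polynomial.finsetSum_coeff, Polynomial.coeff_C_mul_X_pow, hd.eq_iff,
    Finset.sum_ite_eq', hk] using congrArg (Polynomial.coeff · (d k)) hpoly

theorem eq_of_sum_mul_X_pow_eq {s : Finset ℕ} {f g : ℕ → RatFunc K} {d : ℕ → ℕ}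
    (hf : ∀ k, f k ∈ (C : K →+* RatFunc K).fieldRange)
    (hg : ∀ k, g k ∈ (C : K →+* RatFunc K).fieldRange) (hd : Function.Injective d)
    (h : ∑ k ∈ s, f k * X ^ d k = ∑ k ∈ s, g k * X ^ d k) {k : ℕ} (hk : k ∈ s) :
    f k = g k := by
  choose c hc using fun k => RingHom.mem_fieldRange.1 (sub_mem (hf k) (hg k))
  have hzero : ∑ k ∈ s, C (c k) * X ^ d k = 0 := by
    simp only [hc, sub_mul, Finset.sum_sub_distrib, h, sub_self]
  rw [← sub_eq_zero, ← hc, eq_zero_of_sum_C_mul_X_pow_eq_zero hd hzero hk, map_zero]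

theorem exists_algHom_X_eq {f : RatFunc K} (hf : Transcendental K f) :
    ∃ σ : RatFunc K →ₐ[K] RatFunc K, σ X = f :=
  ⟨(IntermediateField.val _).comp (algEquivOfTranscendental f hf).toAlgHom, by
    simp [algEquivOfTranscendental_X]⟩

theorem algHom_C (σ : RatFunc K →ₐ[K] RatFunc K) (c : K) : σ (C c) = C c := by
  rw [← algebraMap_eq_C, σ.commutes]

theorem X_ne_C (c : K) : X ≠ C c := fun h =>
  transcendental_X (h ▸ algebraMap_eq_C (K := K) ▸ isAlgebraic_algebraMap c)

theorem transcendental_C_mul {w : K} (hw : w ≠ 0) {f : RatFunc K} (hf : ∀ c, f ≠ C c) :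
    Transcendental K (C w * f) := by
  refine transcendental_of_ne_C _ fun ⟨c, hc⟩ => hf (c / w) ?_
  rw [map_div₀, ← hc]
  field_simp [(map_ne_zero C).2 hw]

theorem transcendental_C_mul_X {w : K} (hw : w ≠ 0) : Transcendental K (C w * X) :=
  transcendental_C_mul hw X_ne_C

theorem transcendental_C_mul_X_inv {w : K} (hw : w ≠ 0) : Transcendental K (C w * X⁻¹) :=
  transcendental_C_mul hw fun c h => X_ne_C c⁻¹ (by rw [map_inv₀, ← h, inv_inv])

end RatFunc

section FF

variable {K L : Type} [Field K] [Field L]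

theorem map_Cfun {F : Type*} [FunLike F K L] [RingHomClass F K L] (φ : F) (i e et : ℕ)
    (ξ v u : K) :
    φ (Cfun i e et ξ v u) = Cfun i e et (φ ξ) (φ v) (φ u) := by
  by_cases hi : Even i <;> simp [Cfun, hi]

theorem map_FF {F : Type*} [FunLike F K L] [RingHomClass F K L] (φ : F) (a : ℕ → ℕ)
    (ε : ℕ → ℤ) :
    ∀ (N : ℕ) (v u : K), φ (FF a ε N v u) = FF a ε N (φ v) (φ u)
  | 0, _, _ => by simp [FF]
  | 1, _, _ => by simp [FF]
  | m + 2, v, u => by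
    by_cases hm : Even (m + 2) <;>
      simp [FF, hm, map_Cfun, map_FF φ a ε (m + 1) v (v * u), map_FF φ a ε (m + 1) v (v * u⁻¹)]

theorem eInv_le_eInv_succ_of_odd (a : ℕ → ℕ) {i : ℕ} (hi : Odd (i + 1)) :
    eInv a i ≤ eInv a (i + 1) := by
  have hi' : ¬Odd i := fun h => Nat.not_odd_iff_even.2 (h.add_one) hi
  rw [eInv, eInv, if_neg hi', if_pos hi, Finset.sum_range_succ]
  omega

theorem pow_eInv_mul_FF_of_odd (a : ℕ → ℕ) (ε : ℕ → ℤ) {m : ℕ} (hm : Odd (m + 2))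
    (hε : ε m = 0) (v : K) {u : K} (hu : u ≠ 0) :
    u ^ eInv a (m + 2) * FF a ε (m + 2) v u =
      (v * u) ^ eInv a (m + 1) * FF a ε (m + 1) v (v * u) +
        (ε (m + 1) : K) * (u ^ (2 * eInv a (m + 2)) *
          ((v * u⁻¹) ^ eInv a (m + 1) * FF a ε (m + 1) v (v * u⁻¹))) := by
  have hm' : ¬Even (m + 2) := Nat.not_even_iff_odd.2 hm
  simp only [FF, Cfun, hm', if_false, hε, Int.cast_zero, zero_mul, sub_zero, div_one]
  set e := eInv a (m + 2)
  set e' := eInv a (m + 1)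
  have h₁ : u ^ e * u ^ (-((e : ℤ) - e')) = u ^ e' := by
    rw [← zpow_natCast, ← zpow_natCast u e', ← zpow_add₀ hu]; congr 1; ring
  have h₂ : u ^ e * u⁻¹ ^ (-((e : ℤ) - e')) = u ^ (2 * e) * u⁻¹ ^ e' := by
    rw [inv_zpow', neg_neg, inv_pow, ← zpow_natCast, ← zpow_natCast u (2 * e),
      ← zpow_natCast u e', ← zpow_neg, ← zpow_add₀ hu, ← zpow_add₀ hu]
    congr 1; push_cast; ring
  linear_combination (v ^ e' * FF a ε (m + 1) v (v * u)) * h₁ +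
    ((ε (m + 1) : K) * v ^ e' * FF a ε (m + 1) v (v * u⁻¹)) * h₂

end FF

theorem pow_mul_FF_eq_sum_of_transcendental {K : Type} [Field K] (a : ℕ → ℕ) (ε : ℕ → ℤ)
    (N d : ℕ) (s : Finset ℕ) {v : RatFunc K} (hv : v ∈ (RatFunc.C : K →+* RatFunc K).fieldRange)
    {B : ℕ → RatFunc K} (hB : ∀ i, B i ∈ (RatFunc.C : K →+* RatFunc K).fieldRange)
    (h : RatFunc.X ^ d * FF a ε N v RatFunc.X = ∑ i ∈ s, B i * RatFunc.X ^ (2 * i))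
    {t : RatFunc K} (ht : Transcendental K t) :
    t ^ d * FF a ε N v t = ∑ i ∈ s, B i * t ^ (2 * i) := by
  obtain ⟨σ, hσ⟩ := RatFunc.exists_algHom_X_eq ht
  have hfix : ∀ x ∈ (RatFunc.C : K →+* RatFunc K).fieldRange, σ x = x := by
    rintro _ ⟨c, rfl⟩
    exact RatFunc.algHom_C σ c
  simpa [map_FF σ, hσ, hfix v hv, hfix _ (hB _)] using congrArg σ h

theorem Finset.sum_range_succ_eq_of_le {M : Type*} [AddCommMonoid M] {f : ℕ → M} {d e : ℕ}
    (hde : d ≤ e) (hf : ∀ i, d < i → f i = 0) :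
    ∑ i ∈ range (d + 1), f i = ∑ i ∈ range (e + 1), f i :=
  sum_subset (range_subset_range.2 (by omega)) fun i _ hi => hf i (by simpa using hi)

theorem sum_add_mul_pow_mul_sum_eq {L : Type*} [Field L] (b : ℤ → L) {d e : ℕ} (hde : d ≤ e)
    (hb : ∀ i : ℤ, d < i → b i = 0) (c v : L) {u : L} (hu : u ≠ 0) :
    ∑ i ∈ Finset.range (d + 1), b i * (v * u) ^ (2 * i) +
        c * (u ^ (2 * e) * ∑ i ∈ Finset.range (d + 1), b i * (v * u⁻¹) ^ (2 * i)) =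
      ∑ l ∈ Finset.range (e + 1),
        (b l * v ^ (2 * (l : ℤ)) + c * (b (e - l) * v ^ (2 * ((e : ℤ) - l)))) * u ^ (2 * l) := by
  have hb' : ∀ (w : L) (i : ℕ), d < i → b i * w ^ (2 * i) = 0 := fun w i hi => by
    rw [hb i (by exact_mod_cast hi), zero_mul]
  rw [Finset.sum_range_succ_eq_of_le hde (hb' _), Finset.sum_range_succ_eq_of_le hde (hb' _),
    Finset.mul_sum, Finset.mul_sum, ← Finset.sum_range_reflect (fun i => c * (u ^ (2 * e) *
      (b i * (v * u⁻¹) ^ (2 * i)))), ← Finset.sum_add_distrib]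
  refine Finset.sum_congr rfl fun l hl => ?_
  have hle : l ≤ e := Nat.lt_succ_iff.1 (Finset.mem_range.1 hl)
  have hsub : e + 1 - 1 - l = e - l := by omega
  have hvl : v ^ (2 * (l : ℤ)) = v ^ (2 * l) := by
    rw [show (2 : ℤ) * l = ((2 * l : ℕ) : ℤ) by push_cast; ring, zpow_natCast]
  have hve : v ^ (2 * ((e : ℤ) - l)) = v ^ (2 * (e - l)) := by
    rw [show (2 : ℤ) * ((e : ℤ) - l) = ((2 * (e - l) : ℕ) : ℤ) by push_cast [hle]; ring,
      zpow_natCast]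
  have hue : u ^ (2 * e) = u ^ (2 * (e - l)) * u ^ (2 * l) := by
    rw [← pow_add]; congr 1; omega
  rw [hsub, hvl, hve, hue, Nat.cast_sub hle, mul_pow, mul_pow, inv_pow]
  field_simp

theorem statement12_general (n : ℕ) (a : ℕ → ℕ) (ε : ℕ → ℤ)
    (hno : Odd n) (hn3 : 3 ≤ n) (hεn1 : ε (n - 2) = 0)
    (A : ℕ → KK)
    (hA : uGen ^ eInv a n * FF a ε n vGen uGen =
      ∑ i ∈ Finset.range (eInv a n + 1), A i * uGen ^ (2 * i))
    (hAY : ∀ i, ∃ g : RatFunc ℚ, A i = RatFunc.C g)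
    (Bz : ℤ → KK)
    (hB : uGen ^ eInv a (n - 1) * FF a ε (n - 1) vGen uGen =
      ∑ i ∈ Finset.range (eInv a (n - 1) + 1), Bz i * uGen ^ (2 * i))
    (hBY : ∀ m : ℤ, ∃ g : RatFunc ℚ, Bz m = RatFunc.C g)
    (hB0 : ∀ m : ℤ, (m < 0 ∨ (eInv a (n - 1) : ℤ) < m) → Bz m = 0) :
    ∀ l : ℕ, l ≤ eInv a n →
      A l = Bz (l : ℤ) * Yz (l : ℤ) +
        ((ε (n - 1) : ℤ) : KK) *
          (Bz ((eInv a n : ℤ) - l) * Yz ((eInv a n : ℤ) - l)) := by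
  obtain ⟨m, rfl⟩ : ∃ m, n = m + 2 := ⟨n - 2, by omega⟩
  simp only [Nat.add_sub_cancel, Nat.add_succ_sub_one] at hεn1 hB hB0 ⊢
  have hu : uGen ≠ 0 := RatFunc.X_ne_zero
  have hv : vGen ∈ (RatFunc.C : RatFunc ℚ →+* KK).fieldRange := ⟨_, rfl⟩
  have hAconst : ∀ i, A i ∈ (RatFunc.C : RatFunc ℚ →+* KK).fieldRange := fun i =>
    (hAY i).imp fun _ hg => hg.symm
  have hBconst : ∀ i, Bz i ∈ (RatFunc.C : RatFunc ℚ →+* KK).fieldRange := fun i =>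
    (hBY i).imp fun _ hg => hg.symm
  have hBsubst := fun t => pow_mul_FF_eq_sum_of_transcendental a ε (m + 1) _ _ hv
    (fun i => hBconst i) hB (t := t)
  have hexp : ∑ l ∈ Finset.range (eInv a (m + 2) + 1), A l * uGen ^ (2 * l) =
      ∑ l ∈ Finset.range (eInv a (m + 2) + 1), (Bz l * Yz l + ((ε (m + 1) : ℤ) : KK) *
        (Bz (eInv a (m + 2) - l) * Yz (eInv a (m + 2) - l))) * uGen ^ (2 * l) := by
    rw [← hA, pow_eInv_mul_FF_of_odd a ε hno hεn1 vGen hu,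
      hBsubst (vGen * uGen) (RatFunc.transcendental_C_mul_X RatFunc.X_ne_zero),
      hBsubst (vGen * uGen⁻¹) (RatFunc.transcendental_C_mul_X_inv RatFunc.X_ne_zero)]
    exact sum_add_mul_pow_mul_sum_eq Bz (eInv_le_eInv_succ_of_odd a hno)
      (fun i hi => hB0 i (Or.inr hi)) _ vGen hu
  intro l hl
  refine RatFunc.eq_of_sum_mul_X_pow_eq hAconst (fun l => ?_) (mul_right_injective₀ two_ne_zero)
    hexp (Finset.mem_range.2 (Nat.lt_succ_of_le hl))
  exact add_mem (mul_mem (hBconst _) (zpow_mem hv _))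
    (mul_mem (intCast_mem _ _) (mul_mem (hBconst _) (zpow_mem hv _)))

theorem statement12 (n : ℕ) (a : ℕ → ℕ) (ε : ℕ → ℤ) (h : IsNEGK n a ε)
    (hno : Odd n) (hn3 : 3 ≤ n) (hεn1 : ε (n - 2) = 0)
    (A : ℕ → KK)
    (hA : uGen ^ eInv a n * FF a ε n vGen uGen =
      ∑ i ∈ Finset.range (eInv a n + 1), A i * uGen ^ (2 * i))
    (hAY : ∀ i, ∃ g : RatFunc ℚ, A i = RatFunc.C g)
    (Bz : ℤ → KK)
    (hB : uGen ^ eInv a (n - 1) * FF a ε (n - 1) vGen uGen =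
      ∑ i ∈ Finset.range (eInv a (n - 1) + 1), Bz i * uGen ^ (2 * i))
    (hBY : ∀ m : ℤ, ∃ g : RatFunc ℚ, Bz m = RatFunc.C g)
    (hB0 : ∀ m : ℤ, (m < 0 ∨ (eInv a (n - 1) : ℤ) < m) → Bz m = 0) :
    ∀ l : ℕ, l ≤ eInv a n →
      A l = Bz (l : ℤ) * Yz (l : ℤ) +
        ((ε (n - 1) : ℤ) : KK) *
          (Bz ((eInv a n : ℤ) - l) * Yz ((eInv a n : ℤ) - l)) :=
  statement12_general n a ε hno hn3 hεn1 A hA hAY Bz hB hBY hB0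
end
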